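/- arXiv:2301.11556 — 2 statements merged into one kernel-verified Lean document; each statement's English description precedes it below -/
import Mathlib

section
/- (Theorem A1, conformalized early stopping for multi-class classification, marginal coverage.) Let n ≥ 1, K ≥ 2 and let (X_1, Y_1), …, (X_{n+1}, Y_{n+1}) be exchangeable random pairs taking values in 𝒳 × {1, …, K}, where 𝒳 is a measurable space. Let T ≥ 1, let g : (𝒳 × {1, …, K})^{n+1} → {1, …, T} be measurable and invariant under every permutation of its n+1 arguments, and let s : {1, …, T} × 𝒳 × {1, …, K} → ℝ be measurable. For each y ∈ {1, …, K}, set t̂(y) = g((X_1, Y_1), …, (X_n, Y_n), (X_{n+1}, y)), Ŝ_i^y = s(t̂(y), X_i, Y_i) for i ∈ {1, …, n} and Ŝ_{n+1}^y = s(t̂(y), X_{n+1}, y), and define the marginal conformal p-value û_y = (1 + #{i ∈ {1, …, n} : Ŝ_i^y ≤ Ŝ_{n+1}^y}) / (n+1). Define the prediction set Ĉ_α(X_{n+1}) = {y ∈ {1, …, K} : û_y ≥ α}. Then for every α ∈ (0,1), P(Y_{n+1} ∈ Ĉ_α(X_{n+1})) ≥ 1 − α. -/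
/-!
At the true label `y = Y_{n+1}` the augmented data set is the observed one, so `û_y` is the rank
of the test score among the `n + 1` scores of the observed data, divided by `n + 1`. As `g` is
symmetric, permuting the data permutes these scores, so by exchangeability every point is equally
likely to have rank `< α (n + 1)`. At most `α (n + 1)` points can have such a rank, so each of
these probabilities is at most `α`.
-/

open MeasureTheory ProbabilityTheory

noncomputable section

/-- The augmented data set: the `n` calibration pairs together with the test point
`(X_{n+1}, y)`, where `y` is the imagined test label. -/
def augData {Ω 𝒳 : Type*} {n K : ℕ} (X : Fin (n + 1) → Ω → 𝒳)
    (Y : Fin (n + 1) → Ω → Fin K) (y : Fin K) (ω : Ω) : Fin (n + 1) → 𝒳 × Fin K :=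
  fun i => if i = Fin.last n then (X i ω, y) else (X i ω, Y i ω)

/-- Marginal conformal p-value of CES for multi-class classification:
the model `t̂(y) = g` of the augmented data scores the calibration points with their
true labels and the test point with the imagined label `y`; all `n` calibration
points are used for the comparison. -/
def pvalMarg {Ω 𝒳 : Type*} {n K T : ℕ} (X : Fin (n + 1) → Ω → 𝒳)
    (Y : Fin (n + 1) → Ω → Fin K) (g : (Fin (n + 1) → 𝒳 × Fin K) → Fin T)
    (s : Fin T → 𝒳 → Fin K → ℝ) (y : Fin K) (ω : Ω) : ℝ :=
  (1 + ((Finset.univ.filter (fun i : Fin n =>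
      s (g (augData X Y y ω)) (X i.castSucc ω) (Y i.castSucc ω)
        ≤ s (g (augData X Y y ω)) (X (Fin.last n) ω) y)).card : ℝ)) / (n + 1)

open Finset
open scoped ENNReal

open scoped Classical in
theorem sum_measure_le_of_card_le {ι β : Type*} [Fintype ι] [MeasurableSpace β]
    (μ : Measure β) {s : ι → Set β} (hs : ∀ k, MeasurableSet (s k)) {c : ℝ≥0∞}
    (hc : ∀ x, (#{k | x ∈ s k} : ℝ≥0∞) ≤ c) :
    ∑ k, μ (s k) ≤ c * μ Set.univ :=
  calc ∑ k, μ (s k) = ∑ k, ∫⁻ x, (s k).indicator 1 x ∂μ := by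
        simp only [lintegral_indicator_one (hs _)]
    _ = ∫⁻ x, ∑ k, (s k).indicator 1 x ∂μ :=
        (lintegral_finsetSum _ fun k _ => measurable_one.indicator (hs k)).symm
    _ = ∫⁻ x, (#{k | x ∈ s k} : ℝ≥0∞) ∂μ := by
        simp only [Set.indicator_apply, Pi.one_apply, sum_boole]
    _ ≤ ∫⁻ _, c ∂μ := lintegral_mono hc
    _ = c * μ Set.univ := lintegral_const c

namespace Conformal

def Exchangeable {Ω ι β : Type*} [MeasurableSpace Ω] [MeasurableSpace β] (P : Measure Ω)
    (Z : Ω → ι → β) : Prop :=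
  ∀ σ : Equiv.Perm ι, P.map (fun ω i => Z ω (σ i)) = P.map Z

theorem Exchangeable.measure_preimage_eq {Ω ι β : Type*} [MeasurableSpace Ω]
    [MeasurableSpace β] {P : Measure Ω} {Z : Ω → ι → β} (hZ : Exchangeable P Z)
    (hZm : Measurable Z) {A : ι → Set (ι → β)} (hA : ∀ k, MeasurableSet (A k))
    (hperm : ∀ (σ : Equiv.Perm ι) z k, z ∘ σ ∈ A k ↔ z ∈ A (σ k)) (j k : ι) :
    P (Z ⁻¹' A j) = P (Z ⁻¹' A k) := by
  classical
  have hσ : Z ⁻¹' A j = (fun ω i => Z ω (Equiv.swap k j i)) ⁻¹' A k := by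
    ext ω
    have h := hperm (Equiv.swap k j) (Z ω) k
    rw [Equiv.swap_apply_left] at h
    exact h.symm
  have hZσ : Measurable fun ω i => Z ω (Equiv.swap k j i) := by fun_prop
  rw [hσ, ← Measure.map_apply hZσ (hA k), hZ, Measure.map_apply hZm (hA k)]

section Rank

variable {ι α : Type*} [Fintype ι] [LinearOrder α]

def rank (f : ι → α) (k : ι) : ℕ :=
  #{i | f i ≤ f k}

theorem rank_comp_perm (f : ι → α) (σ : Equiv.Perm ι) (k : ι) :
    rank (f ∘ σ) k = rank f (σ k) :=
  card_equiv σ (by simp)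

theorem rank_last {n : ℕ} (f : Fin (n + 1) → α) :
    rank f (Fin.last n) = #{i : Fin n | f i.castSucc ≤ f (Fin.last n)} + 1 := by
  simp only [rank, card_filter, Fin.sum_univ_castSucc, le_refl, if_true]

/-- The point of largest score among those of rank `< c` has rank at least their number. -/
theorem card_rank_lt_le (f : ι → α) {c : ℝ} (hc : 0 ≤ c) :
    (#{k | (rank f k : ℝ) < c} : ℝ) ≤ c := by
  obtain h | hne := (univ.filter fun k => (rank f k : ℝ) < c).eq_empty_or_nonempty
  · simpa [h] using hc
  obtain ⟨k, hk, hmax⟩ := exists_max_image _ f hne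
  have hsub : ({k | (rank f k : ℝ) < c} : Finset ι) ⊆ ({i | f i ≤ f k} : Finset ι) :=
    fun i hi => mem_filter.mpr ⟨mem_univ i, hmax i hi⟩
  calc (#{k | (rank f k : ℝ) < c} : ℝ) ≤ rank f k := by exact_mod_cast card_le_card hsub
    _ ≤ c := (mem_filter.mp hk).2.le

variable [TopologicalSpace α] [OrderClosedTopology α] [SecondCountableTopology α]
  [MeasurableSpace α] [OpensMeasurableSpace α]

theorem measurable_rank {β : Type*} [MeasurableSpace β] {F : β → ι → α}
    (hF : ∀ i, Measurable fun z => F z i) (k : ι) :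
    Measurable fun z => rank (F z) k := by
  simp only [rank, card_filter]
  exact Finset.measurable_sum _ fun i _ =>
    Measurable.ite (measurableSet_le (hF i) (hF k)) measurable_const measurable_const

namespace Exchangeable

variable {Ω β : Type*} [MeasurableSpace Ω] [MeasurableSpace β] {P : Measure Ω}
  [IsProbabilityMeasure P] {Z : Ω → ι → β} {F : (ι → β) → ι → α}

theorem measure_rank_lt_le (hZ : Exchangeable P Z) (hZm : Measurable Z)
    (hF : ∀ i, Measurable fun z => F z i) (hFperm : ∀ (σ : Equiv.Perm ι) z, F (z ∘ σ) = F z ∘ σ)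
    {c : ℝ} (hc : 0 ≤ c) (j : ι) :
    P {ω | (rank (F (Z ω)) j : ℝ) < c} ≤ ENNReal.ofReal (c / Fintype.card ι) := by
  classical
  set A : ι → Set (ι → β) := fun k => {z | (rank (F z) k : ℝ) < c}
  have hA : ∀ k, MeasurableSet (A k) := fun k =>
    measurable_rank hF k (MeasurableSet.of_discrete (s := {m : ℕ | (m : ℝ) < c}))
  have hperm : ∀ (σ : Equiv.Perm ι) z k, z ∘ σ ∈ A k ↔ z ∈ A (σ k) := by
    intro σ z k
    simp only [A, Set.mem_ofPred_eq, hFperm, rank_comp_perm]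
  have hcard : 0 < (Fintype.card ι : ℝ≥0∞) := by exact_mod_cast Fintype.card_pos_iff.mpr ⟨j⟩
  have hsum : Fintype.card ι * P (Z ⁻¹' A j) ≤ ENNReal.ofReal c :=
    calc Fintype.card ι * P (Z ⁻¹' A j) = ∑ k, P (Z ⁻¹' A k) := by
          rw [sum_congr rfl fun k _ => hZ.measure_preimage_eq hZm hA hperm k j, sum_const,
            card_univ, nsmul_eq_mul]
      _ ≤ ENNReal.ofReal c * P Set.univ :=
          sum_measure_le_of_card_le P (fun k => hZm (hA k)) fun ω => by
            rw [← ENNReal.ofReal_natCast]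
            exact ENNReal.ofReal_le_ofReal (card_rank_lt_le (F (Z ω)) hc)
      _ = ENNReal.ofReal c := by simp
  rw [ENNReal.ofReal_div_of_pos (by exact_mod_cast hcard), ENNReal.ofReal_natCast,
    ENNReal.le_div_iff_mul_le (Or.inl hcard.ne') (Or.inl (ENNReal.natCast_ne_top _)), mul_comm]
  exact hsum

theorem one_sub_le_measure_le_rank (hZ : Exchangeable P Z) (hZm : Measurable Z)
    (hF : ∀ i, Measurable fun z => F z i) (hFperm : ∀ (σ : Equiv.Perm ι) z, F (z ∘ σ) = F z ∘ σ)
    {c : ℝ} (hc : 0 ≤ c) (j : ι) :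
    ENNReal.ofReal (1 - c / Fintype.card ι) ≤ P {ω | c ≤ rank (F (Z ω)) j} := by
  have hmeas : MeasurableSet {ω | (rank (F (Z ω)) j : ℝ) < c} :=
    (measurable_rank hF j).comp hZm (MeasurableSet.of_discrete (s := {m : ℕ | (m : ℝ) < c}))
  have hcompl : {ω | c ≤ rank (F (Z ω)) j} = {ω | (rank (F (Z ω)) j : ℝ) < c}ᶜ := by
    ext ω
    simp
  rw [hcompl, prob_compl_eq_one_sub hmeas, ENNReal.ofReal_sub _ (by positivity),
    ENNReal.ofReal_one]
  exact tsub_le_tsub_left (hZ.measure_rank_lt_le hZm hF hFperm hc j) 1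

end Exchangeable

end Rank

end Conformal

section CES

variable {ι 𝒳 𝒴 𝒯 : Type*}

def cesScores (g : (ι → 𝒳 × 𝒴) → 𝒯) (s : 𝒯 → 𝒳 → 𝒴 → ℝ) (z : ι → 𝒳 × 𝒴) (i : ι) : ℝ :=
  s (g z) (z i).1 (z i).2

theorem cesScores_comp_perm {g : (ι → 𝒳 × 𝒴) → 𝒯} (s : 𝒯 → 𝒳 → 𝒴 → ℝ)
    (hginv : ∀ (σ : Equiv.Perm ι) z, g (z ∘ σ) = g z) (σ : Equiv.Perm ι) (z : ι → 𝒳 × 𝒴) :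
    cesScores g s (z ∘ σ) = cesScores g s z ∘ σ := by
  ext i
  simp only [cesScores, hginv, Function.comp_apply]

theorem measurable_cesScores_apply [MeasurableSpace 𝒳] [MeasurableSpace 𝒴] [MeasurableSpace 𝒯]
    {g : (ι → 𝒳 × 𝒴) → 𝒯} (hg : Measurable g) {s : 𝒯 → 𝒳 → 𝒴 → ℝ}
    (hs : Measurable fun p : 𝒯 × 𝒳 × 𝒴 => s p.1 p.2.1 p.2.2) (i : ι) :
    Measurable fun z => cesScores g s z i :=
  hs.comp (hg.prodMk (measurable_pi_apply i))

end CES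

theorem augData_trueLabel {Ω 𝒳 : Type*} {n K : ℕ} (X : Fin (n + 1) → Ω → 𝒳)
    (Y : Fin (n + 1) → Ω → Fin K) (ω : Ω) :
    augData X Y (Y (Fin.last n) ω) ω = fun i => (X i ω, Y i ω) := by
  ext i : 1
  by_cases h : i = Fin.last n
  · subst h
    simp [augData]
  · simp [augData, h]

theorem pvalMarg_trueLabel {Ω 𝒳 : Type*} {n K T : ℕ} (X : Fin (n + 1) → Ω → 𝒳)
    (Y : Fin (n + 1) → Ω → Fin K) (g : (Fin (n + 1) → 𝒳 × Fin K) → Fin T)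
    (s : Fin T → 𝒳 → Fin K → ℝ) (ω : Ω) :
    pvalMarg X Y g s (Y (Fin.last n) ω) ω =
      Conformal.rank (cesScores g s fun i => (X i ω, Y i ω)) (Fin.last n) / (n + 1) := by
  rw [pvalMarg, augData_trueLabel, Conformal.rank_last, Nat.cast_add, Nat.cast_one, add_comm]
  rfl

theorem ces_classification_marginal_coverage_general
    {Ω 𝒳 : Type*} [MeasurableSpace Ω] [MeasurableSpace 𝒳]
    (P : Measure Ω) [IsProbabilityMeasure P]
    (n K T : ℕ)
    (X : Fin (n + 1) → Ω → 𝒳) (Y : Fin (n + 1) → Ω → Fin K)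
    (hXY : ∀ i, Measurable (fun ω => (X i ω, Y i ω)))
    (hexch : ∀ σ : Equiv.Perm (Fin (n + 1)),
      P.map (fun ω => fun i => (X (σ i) ω, Y (σ i) ω)) =
        P.map (fun ω => fun i => (X i ω, Y i ω)))
    (g : (Fin (n + 1) → 𝒳 × Fin K) → Fin T) (hg : Measurable g)
    (hginv : ∀ (σ : Equiv.Perm (Fin (n + 1))) (z : Fin (n + 1) → 𝒳 × Fin K),
      g (fun i => z (σ i)) = g z)
    (s : Fin T → 𝒳 → Fin K → ℝ)
    (hs : Measurable (fun p : Fin T × 𝒳 × Fin K => s p.1 p.2.1 p.2.2))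
    (α : ℝ) (hα : α ∈ Set.Ioo (0 : ℝ) 1) :
    ENNReal.ofReal (1 - α) ≤
      P {ω | α ≤ pvalMarg X Y g s (Y (Fin.last n) ω) ω} := by
  have hn : (0 : ℝ) < n + 1 := by positivity
  have hZ : Conformal.Exchangeable P fun ω i => (X i ω, Y i ω) := hexch
  have hcov := hZ.one_sub_le_measure_le_rank (measurable_pi_lambda _ hXY) (measurable_cesScores_apply hg hs) (cesScores_comp_perm s hginv)
    (mul_nonneg hα.1.le hn.le) (Fin.last n)
  simp only [Fintype.card_fin, Nat.cast_add, Nat.cast_one, mul_div_cancel_right₀ _ hn.ne'] at hcov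
  simpa only [pvalMarg_trueLabel, le_div_iff₀ hn] using hcov

/-- **Theorem A1, CES for multi-class classification, marginal coverage.**
The CES prediction set `Ĉ_α(X_{n+1}) = {y : û_y ≥ α}` has marginal coverage `1 - α`. -/
theorem ces_classification_marginal_coverage
    {Ω 𝒳 : Type*} [MeasurableSpace Ω] [MeasurableSpace 𝒳]
    (P : Measure Ω) [IsProbabilityMeasure P]
    (n K T : ℕ) (hn : 1 ≤ n) (hK : 2 ≤ K) (hT : 1 ≤ T)
    (X : Fin (n + 1) → Ω → 𝒳) (Y : Fin (n + 1) → Ω → Fin K)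
    (hXY : ∀ i, Measurable (fun ω => (X i ω, Y i ω)))
    (hexch : ∀ σ : Equiv.Perm (Fin (n + 1)),
      P.map (fun ω => fun i => (X (σ i) ω, Y (σ i) ω)) =
        P.map (fun ω => fun i => (X i ω, Y i ω)))
    (g : (Fin (n + 1) → 𝒳 × Fin K) → Fin T) (hg : Measurable g)
    (hginv : ∀ (σ : Equiv.Perm (Fin (n + 1))) (z : Fin (n + 1) → 𝒳 × Fin K),
      g (fun i => z (σ i)) = g z)
    (s : Fin T → 𝒳 → Fin K → ℝ)
    (hs : Measurable (fun p : Fin T × 𝒳 × Fin K => s p.1 p.2.1 p.2.2))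
    (α : ℝ) (hα : α ∈ Set.Ioo (0 : ℝ) 1) :
    ENNReal.ofReal (1 - α) ≤
      P {ω | α ≤ pvalMarg X Y g s (Y (Fin.last n) ω) ω} :=
  ces_classification_marginal_coverage_general P n K T X Y hXY hexch g hg hginv s hs α hα

end
end

section
/- (Theorem 4, conformalized early stopping for quantile regression.) Let n ≥ 1 and let (X_1, Y_1), …, (X_{n+1}, Y_{n+1}) be exchangeable random pairs taking values in 𝒳 × ℝ, where 𝒳 is a measurable space. Fix β_lo, β_hi ∈ (0,1) and α ∈ (0,1). Let q^lo_1, …, q^lo_T : 𝒳 → ℝ and q^hi_1, …, q^hi_T : 𝒳 → ℝ be measurable quantile regression functions. For (x, y) ∈ 𝒳 × ℝ, let m_lo(x, y) be the smallest index t minimizing Σ_{i=1}^{n} ρ_{β_lo}(Y_i, q^lo_t(X_i)) + ρ_{β_lo}(y, q^lo_t(x)) over t ∈ {1, …, T}, and let m_hi(x, y) be the smallest index t minimizing Σ_{i=1}^{n} ρ_{β_hi}(Y_i, q^hi_t(X_i)) + ρ_{β_hi}(y, q^hi_t(x)). For (a, b) ∈ {1, …, T}², define scores E_i(a, b) = max(q^lo_a(X_i)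 − Y_i, Y_i − q^hi_b(X_i)) for 1 ≤ i ≤ n, and let Q(a, b) be the ⌈(1−α)(n+1)⌉-th smallest value of {E_i(a, b) : 1 ≤ i ≤ n} (equal to +∞ if ⌈(1−α)(n+1)⌉ > n). Define Ĉ_α(X_{n+1}) as the convex hull of the set {y ∈ ℝ : q^lo_{m_lo(X_{n+1}, y)}(X_{n+1}) − Q(m_lo(X_{n+1}, y), m_hi(X_{n+1}, y)) ≤ y ≤ q^hi_{m_hi(X_{n+1}, y)}(X_{n+1}) + Q(m_lo(X_{n+1}, y), m_hi(X_{n+1}, y))}. Then P(Y_{n+1} ∈ Ĉ_α(X_{n+1})) ≥ 1 − α. -/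
/-!
Both selected models minimize losses that are symmetric in the `n + 1` augmented data points, so
the conformity scores of the augmented data are exchangeable. Hence the test score is at most the
`k`-th smallest of all `n + 1` scores with probability at least `k / (n + 1) ≥ 1 - α`. When it is,
it is also at most the `k`-th smallest of the `n` calibration scores, so that `Y (n + 1)` itself
lies in the set whose convex hull is the prediction interval.
-/

open MeasureTheory

noncomputable section

/-- The smallest index `t : Fin T` minimizing `f`. -/
def argminFin {T : ℕ} (hT : 0 < T) (f : Fin T → ℝ) : Fin T :=
  (Finset.univ.filter fun t => ∀ u, f t ≤ f u).min' (by
    obtain ⟨t, -, ht⟩ := Finset.exists_min_image Finset.univ f ⟨⟨0, hT⟩, Finset.mem_univ _⟩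
    exact ⟨t, Finset.mem_filter.mpr ⟨Finset.mem_univ t, fun u => ht u (Finset.mem_univ u)⟩⟩)

/-- The `k`-th smallest element of a multiset of reals (`k` counted from 1). -/
def kthSmallest (s : Multiset ℝ) (k : ℕ) : ℝ :=
  (s.sort (· ≤ ·)).getD (k - 1) 0

/-- The pinball (quantile) loss `ρ_β(y, q)`. -/
def pinball (β y q : ℝ) : ℝ := if q < y then β * (y - q) else (1 - β) * (q - y)

open Finset

theorem List.Pairwise.getElem_le_iff_lt_countP {α : Type*} [LinearOrder α] {l : List α}
    (hl : l.Pairwise (· ≤ ·)) (q : α) {i : ℕ} (hi : i < l.length) :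
    l[i] ≤ q ↔ i < l.countP (· ≤ q) := by
  induction l generalizing i with
  | nil => simp at hi
  | cons a l ih =>
    rw [List.pairwise_cons] at hl
    by_cases ha : a ≤ q
    · cases i with
      | zero => simp [ha]
      | succ j => simp [ha, ih hl.2 (by simpa using hi)]
    · have hgt : ∀ b ∈ a :: l, q < b := by
        simp only [List.mem_cons, forall_eq_or_imp]
        exact ⟨not_le.1 ha, fun b hb => (not_le.1 ha).trans_le (hl.1 b hb)⟩
      rw [List.countP_eq_zero.2 (by simpa using hgt)]
      simpa using hgt _ (List.getElem_mem hi)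

theorem kthSmallest_le_iff {s : Multiset ℝ} {k : ℕ} (hk₀ : 1 ≤ k) (hk : k ≤ Multiset.card s)
    (q : ℝ) : kthSmallest s k ≤ q ↔ k ≤ s.countP (· ≤ q) := by
  have hlen : k - 1 < (s.sort (· ≤ ·)).length := by rw [Multiset.length_sort]; omega
  have hcount : s.countP (· ≤ q) = (s.sort (· ≤ ·)).countP (· ≤ q) := by
    conv_lhs => rw [← s.sort_eq (· ≤ ·)]
    rfl
  rw [kthSmallest, List.getD_eq_getElem _ _ hlen, (s.pairwise_sort _).getElem_le_iff_lt_countP,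
    hcount]
  omega

theorem le_countP_kthSmallest {s : Multiset ℝ} {k : ℕ} (hk : k ≤ Multiset.card s) :
    k ≤ s.countP (· ≤ kthSmallest s k) := by
  rcases Nat.eq_zero_or_pos k with rfl | hk₀
  · exact Nat.zero_le _
  · exact (kthSmallest_le_iff hk₀ hk _).1 le_rfl

theorem kthSmallest_le_kthSmallest_of_le {s t : Multiset ℝ} (hst : s ≤ t) {k : ℕ} (hk₀ : 1 ≤ k)
    (hk : k ≤ Multiset.card s) : kthSmallest t k ≤ kthSmallest s k := by
  rw [kthSmallest_le_iff hk₀ (hk.trans (Multiset.card_le_card hst))]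
  exact (le_countP_kthSmallest hk).trans (Multiset.countP_le_of_le _ hst)

theorem kthSmallest_map_univ_le_kthSmallest_ofFn_castSucc {n k : ℕ} (f : Fin (n + 1) → ℝ)
    (hk₀ : 1 ≤ k) (hk : k ≤ n) :
    kthSmallest (univ.val.map f) k ≤ kthSmallest ↑(List.ofFn fun i : Fin n => f i.castSucc) k := by
  refine kthSmallest_le_kthSmallest_of_le ?_ hk₀ (by simpa using hk)
  rw [Fin.univ_val_map, List.ofFn_succ', List.concat_eq_append]
  exact Multiset.coe_le.2 (List.sublist_append_left _ _).subperm

theorem Multiset.countP_map_univ_val {ι α : Type*} [Fintype ι] (x : ι → α) (p : α → Prop)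
    [DecidablePred p] : (univ.val.map x).countP p = #{i | p (x i)} := by
  rw [Multiset.countP_map]; rfl

theorem measurable_kthSmallest_map_univ {ι : Type*} [Fintype ι] {k : ℕ} (hk₀ : 1 ≤ k)
    (hk : k ≤ Fintype.card ι) :
    Measurable fun x : ι → ℝ => kthSmallest (univ.val.map x) k := by
  classical
  refine measurable_of_Iic fun q => ?_
  have hcount : Measurable fun x : ι → ℝ => #{i | x i ≤ q} := by
    simp only [card_filter]
    exact Finset.measurable_sum _ fun i _ =>
      Measurable.ite (measurableSet_le (measurable_pi_apply i) measurable_const)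
        measurable_const measurable_const
  have : (fun x : ι → ℝ => kthSmallest (univ.val.map x) k) ⁻¹' Set.Iic q =
      (fun x : ι → ℝ => #{i | x i ≤ q}) ⁻¹' Set.Ici k := by
    ext x
    rw [Set.mem_preimage, Set.mem_Iic, kthSmallest_le_iff hk₀ (by simpa using hk),
      Multiset.countP_map_univ_val]
    rfl
  rw [this]
  exact hcount measurableSet_Ici

theorem argminFin_eq_iff {T : ℕ} (hT : 0 < T) (f : Fin T → ℝ) (t : Fin T) :
    argminFin hT f = t ↔ ∀ u, f t ≤ f u ∧ (u < t → f t < f u) := by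
  rw [argminFin, Finset.min'_eq_iff]
  simp only [Finset.mem_filter, Finset.mem_univ, true_and]
  constructor
  · rintro ⟨hmin, hfirst⟩ u
    refine ⟨hmin u, fun hut => lt_of_not_ge fun hut' => ?_⟩
    exact (hfirst u fun v => hut'.trans (hmin v)).not_gt hut
  · intro h
    refine ⟨fun u => (h u).1, fun s hs => le_of_not_gt fun hst => ?_⟩
    exact ((h s).2 hst).not_ge (hs t)

theorem measurable_argminFin {δ : Type*} [MeasurableSpace δ] {T : ℕ} (hT : 0 < T)
    {L : Fin T → δ → ℝ} (hL : ∀ t, Measurable (L t)) :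
    Measurable fun d => argminFin hT fun t => L t d := by
  refine measurable_to_countable' fun t => ?_
  simp only [Set.preimage, Set.mem_singleton_iff, argminFin_eq_iff]
  exact measurableSet_setOfPred.2 (Measurable.forall fun u =>
    (measurableSet_le (hL t) (hL u)).mem.and
      (measurable_const.imp (measurableSet_lt (hL t) (hL u)).mem))

theorem measurable_pinball {δ : Type*} [MeasurableSpace δ] (β : ℝ) {f g : δ → ℝ}
    (hf : Measurable f) (hg : Measurable g) : Measurable fun d => pinball β (f d) (g d) :=
  Measurable.ite (measurableSet_lt hg hf) (measurable_const.mul (hf.sub hg))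
    (measurable_const.mul (hg.sub hf))

open Classical in
theorem natCast_mul_measure_univ_le_sum_measure {ι δ : Type*} [Fintype ι] [MeasurableSpace δ]
    (μ : Measure δ) {A : ι → Set δ} (hA : ∀ i, MeasurableSet (A i)) {k : ℕ}
    (hk : ∀ d, k ≤ #{i | d ∈ A i}) : k * μ Set.univ ≤ ∑ i, μ (A i) := by
  calc (k : ENNReal) * μ Set.univ = ∫⁻ _, (k : ENNReal) ∂μ := (lintegral_const _).symm
    _ ≤ ∫⁻ d, ∑ i, (A i).indicator 1 d ∂μ := lintegral_mono fun d => by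
      simp only [Set.indicator_apply, Pi.one_apply, Finset.sum_boole]
      exact_mod_cast hk d
    _ = ∑ i, μ (A i) := by
      rw [lintegral_finsetSum _ fun i _ => measurable_one.indicator (hA i)]
      exact Finset.sum_congr rfl fun i _ => lintegral_indicator_one (hA i)

theorem ENNReal.ofReal_le_of_natCeil_le_mul {a : ℝ} {n : ℕ} {x : ENNReal}
    (h : (⌈a * ((n : ℝ) + 1)⌉₊ : ENNReal) ≤ (n + 1) * x) : ENNReal.ofReal a ≤ x := by
  refine (ENNReal.mul_le_mul_iff_right (a := (n : ENNReal) + 1) (by positivity) (by simp)).1 ?_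
  calc ((n : ENNReal) + 1) * ENNReal.ofReal a = ENNReal.ofReal (a * ((n : ℝ) + 1)) := by
        rw [ENNReal.ofReal_mul' (by positivity), mul_comm]
        norm_cast
    _ ≤ ⌈a * ((n : ℝ) + 1)⌉₊ := ENNReal.ofReal_le_of_le_toReal (by simpa using Nat.le_ceil _)
    _ ≤ (n + 1) * x := h

section Exchangeable

variable {Ω ι β : Type*} [MeasurableSpace Ω] [MeasurableSpace β]

def Exchangeable (P : Measure Ω) (Z : Ω → ι → β) : Prop :=
  ∀ σ : Equiv.Perm ι, P.map (fun ω => Z ω ∘ σ) = P.map Z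

theorem Exchangeable.measure_preimage_comp_perm {P : Measure Ω} {Z : Ω → ι → β}
    (hZ : Exchangeable P Z) (hZm : Measurable Z) (σ : Equiv.Perm ι) {A : Set (ι → β)}
    (hA : MeasurableSet A) : P ((fun ω => Z ω ∘ σ) ⁻¹' A) = P (Z ⁻¹' A) := by
  have hσ : Measurable fun ω => Z ω ∘ σ := by fun_prop
  rw [← Measure.map_apply hσ hA, hZ σ, Measure.map_apply hZm hA]

theorem Exchangeable.natCast_mul_measure_univ_le_card_mul_measure_le_kthSmallest [Fintype ι]
    {P : Measure Ω} {Z : Ω → ι → β} (hZ : Exchangeable P Z) (hZm : Measurable Z)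
    {S : (ι → β) → ι → ℝ} (hS : ∀ (σ : Equiv.Perm ι) z, S (z ∘ σ) = S z ∘ σ)
    (hSm : ∀ i, Measurable fun z => S z i) {k : ℕ} (hk : k ≤ Fintype.card ι) (i : ι) :
    k * P Set.univ ≤
      Fintype.card ι * P {ω | S (Z ω) i ≤ kthSmallest (univ.val.map (S (Z ω))) k} := by
  classical
  rcases Nat.eq_zero_or_pos k with rfl | hk₀
  · simp
  set Q : (ι → β) → ℝ := fun z => kthSmallest (univ.val.map (S z)) k with hQ
  set A : ι → Set (ι → β) := fun j => {z | S z j ≤ Q z} with hA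
  have hQσ (σ : Equiv.Perm ι) (z : ι → β) : Q (z ∘ σ) = Q z := by
    simp only [hQ, hS, ← Multiset.map_map, Multiset.map_univ_val_equiv]
  have hAm (j : ι) : MeasurableSet (A j) := measurableSet_le (hSm j)
    ((measurable_kthSmallest_map_univ hk₀ hk).comp (measurable_pi_lambda _ hSm))
  have hAeq (j : ι) : P (Z ⁻¹' A j) = P (Z ⁻¹' A i) := by
    rw [← hZ.measure_preimage_comp_perm hZm (Equiv.swap j i) (hAm i)]
    congr 1
    ext ω
    simp [hA, hS, hQσ]
  have hcount (ω : Ω) : k ≤ #{j | ω ∈ Z ⁻¹' A j} := by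
    have := le_countP_kthSmallest (s := univ.val.map (S (Z ω))) (by simpa using hk)
    simpa [hA, hQ, Multiset.countP_map_univ_val] using this
  calc (k : ENNReal) * P Set.univ ≤ ∑ j, P (Z ⁻¹' A j) :=
        natCast_mul_measure_univ_le_sum_measure P (fun j => hZm (hAm j)) hcount
    _ = Fintype.card ι * P (Z ⁻¹' A i) := by simp [hAeq]

end Exchangeable

section CES

variable {𝒳 : Type*} {n T : ℕ}

def augmentedPinballLoss (β : ℝ) (q : 𝒳 → ℝ) (z : Fin (n + 1) → 𝒳 × ℝ) : ℝ :=
  (∑ i : Fin n, pinball β (z i.castSucc).2 (q (z i.castSucc).1)) +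
    pinball β (z (Fin.last n)).2 (q (z (Fin.last n)).1)

theorem augmentedPinballLoss_eq_sum (β : ℝ) (q : 𝒳 → ℝ) (z : Fin (n + 1) → 𝒳 × ℝ) :
    augmentedPinballLoss β q z = ∑ i, pinball β (z i).2 (q (z i).1) :=
  (Fin.sum_univ_castSucc fun i => pinball β (z i).2 (q (z i).1)).symm

theorem augmentedPinballLoss_comp_perm (β : ℝ) (q : 𝒳 → ℝ) (z : Fin (n + 1) → 𝒳 × ℝ)
    (σ : Equiv.Perm (Fin (n + 1))) :
    augmentedPinballLoss β q (z ∘ σ) = augmentedPinballLoss β q z := by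
  simp only [augmentedPinballLoss_eq_sum, Function.comp_apply]
  exact Equiv.sum_comp σ fun i => pinball β (z i).2 (q (z i).1)

def selectedModel (hT : 0 < T) (β : ℝ) (q : Fin T → 𝒳 → ℝ) (z : Fin (n + 1) → 𝒳 × ℝ) :
    Fin T :=
  argminFin hT fun t => augmentedPinballLoss β (q t) z

def cqrScore (lo hi : 𝒳 → ℝ) (p : 𝒳 × ℝ) : ℝ := max (lo p.1 - p.2) (p.2 - hi p.1)

theorem cqrScore_le_iff (lo hi : 𝒳 → ℝ) (x : 𝒳) (y Q : ℝ) :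
    cqrScore lo hi (x, y) ≤ Q ↔ lo x - Q ≤ y ∧ y ≤ hi x + Q := by
  rw [cqrScore, max_le_iff]
  constructor <;> rintro ⟨h₁, h₂⟩ <;> constructor <;> linarith

def cesScore (hT : 0 < T) (βlo βhi : ℝ) (qlo qhi : Fin T → 𝒳 → ℝ) (z : Fin (n + 1) → 𝒳 × ℝ)
    (i : Fin (n + 1)) : ℝ :=
  cqrScore (qlo (selectedModel hT βlo qlo z)) (qhi (selectedModel hT βhi qhi z)) (z i)

theorem cesScore_comp_perm (hT : 0 < T) (βlo βhi : ℝ) (qlo qhi : Fin T → 𝒳 → ℝ)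
    (σ : Equiv.Perm (Fin (n + 1))) (z : Fin (n + 1) → 𝒳 × ℝ) :
    cesScore hT βlo βhi qlo qhi (z ∘ σ) = cesScore hT βlo βhi qlo qhi z ∘ σ := by
  ext i
  simp only [cesScore, selectedModel, augmentedPinballLoss_comp_perm, Function.comp_apply]

variable [MeasurableSpace 𝒳]

theorem measurable_selectedModel (hT : 0 < T) (β : ℝ) {q : Fin T → 𝒳 → ℝ}
    (hq : ∀ t, Measurable (q t)) :
    Measurable (selectedModel (n := n) hT β q) := by
  refine measurable_argminFin hT fun t => ?_
  rw [funext (augmentedPinballLoss_eq_sum β (q t))]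
  exact Finset.measurable_sum _ fun i _ => measurable_pinball β (measurable_pi_apply i).snd
    ((hq t).comp (measurable_pi_apply i).fst)

theorem measurable_cesScore (hT : 0 < T) (βlo βhi : ℝ) {qlo qhi : Fin T → 𝒳 → ℝ}
    (hqlo : ∀ t, Measurable (qlo t)) (hqhi : ∀ t, Measurable (qhi t)) (i : Fin (n + 1)) :
    Measurable fun z => cesScore hT βlo βhi qlo qhi z i := by
  have hx : Measurable fun z : Fin (n + 1) → 𝒳 × ℝ => (z i).1 := (measurable_pi_apply i).fst
  have hy : Measurable fun z : Fin (n + 1) → 𝒳 × ℝ => (z i).2 := (measurable_pi_apply i).snd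
  have hlo := (measurable_from_prod_countable_left (f := fun p : 𝒳 × Fin T => qlo p.2 p.1)
    hqlo).comp (hx.prodMk (measurable_selectedModel hT βlo hqlo))
  have hhi := (measurable_from_prod_countable_left (f := fun p : 𝒳 × Fin T => qhi p.2 p.1)
    hqhi).comp (hx.prodMk (measurable_selectedModel hT βhi hqhi))
  exact (hlo.sub hy).max (hy.sub hhi)

end CES

theorem ces_quantile_regression_coverage_general
    {Ω 𝒳 : Type*} [MeasurableSpace Ω] [MeasurableSpace 𝒳]
    (P : Measure Ω) [IsProbabilityMeasure P]
    (n T : ℕ) (hT : 0 < T)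
    (X : Fin (n + 1) → Ω → 𝒳) (Y : Fin (n + 1) → Ω → ℝ)
    (hXY : ∀ i, Measurable (fun ω => (X i ω, Y i ω)))
    (hexch : ∀ σ : Equiv.Perm (Fin (n + 1)),
      P.map (fun ω => fun i => (X (σ i) ω, Y (σ i) ω)) =
        P.map (fun ω => fun i => (X i ω, Y i ω)))
    (βlo βhi : ℝ)
    (qlo qhi : Fin T → 𝒳 → ℝ)
    (hqlo : ∀ t, Measurable (qlo t)) (hqhi : ∀ t, Measurable (qhi t))
    (α : ℝ) (hα : α ∈ Set.Ioo (0 : ℝ) 1) :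
    ENNReal.ofReal (1 - α) ≤
      P {ω |
        Y (Fin.last n) ω ∈ convexHull ℝ {y : ℝ |
          let mlo : Fin T := argminFin hT (fun t =>
            (∑ i : Fin n, pinball βlo (Y i.castSucc ω) (qlo t (X i.castSucc ω))) +
              pinball βlo y (qlo t (X (Fin.last n) ω)))
          let mhi : Fin T := argminFin hT (fun t =>
            (∑ i : Fin n, pinball βhi (Y i.castSucc ω) (qhi t (X i.castSucc ω))) +
              pinball βhi y (qhi t (X (Fin.last n) ω)))
          let k : ℕ := ⌈(1 - α) * ((n : ℝ) + 1)⌉₊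
          let Q : ℝ := kthSmallest
            (↑(List.ofFn fun i : Fin n =>
              max (qlo mlo (X i.castSucc ω) - Y i.castSucc ω)
                (Y i.castSucc ω - qhi mhi (X i.castSucc ω)))) k
          n < k ∨
            (qlo mlo (X (Fin.last n) ω) - Q ≤ y ∧
              y ≤ qhi mhi (X (Fin.last n) ω) + Q)}} := by
  obtain ⟨hα₀, hα₁⟩ := hα
  set k := ⌈(1 - α) * ((n : ℝ) + 1)⌉₊
  rcases lt_or_ge n k with hnk | hkn
  · calc ENNReal.ofReal (1 - α) ≤ P Set.univ := by
          rw [measure_univ]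
          exact ENNReal.ofReal_le_one.2 (by linarith)
      _ ≤ _ := measure_mono fun ω _ =>
          show Y (Fin.last n) ω ∈ convexHull ℝ _ from subset_convexHull ℝ _ (Or.inl hnk)
  have hk₀ : 1 ≤ k := Nat.ceil_pos.2 (by nlinarith)
  let Z : Ω → Fin (n + 1) → 𝒳 × ℝ := fun ω i => (X i ω, Y i ω)
  have hcov := Exchangeable.natCast_mul_measure_univ_le_card_mul_measure_le_kthSmallest
    (Z := Z) hexch (measurable_pi_lambda _ hXY) (cesScore_comp_perm hT βlo βhi qlo qhi)
    (measurable_cesScore hT βlo βhi hqlo hqhi) (by simpa using hkn.trans n.le_succ) (Fin.last n)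
  rw [measure_univ, mul_one, Fintype.card_fin, Nat.cast_succ] at hcov
  refine (ENNReal.ofReal_le_of_natCeil_le_mul hcov).trans (measure_mono fun ω hω => ?_)
  refine show Y (Fin.last n) ω ∈ convexHull ℝ _ from subset_convexHull ℝ _ (Or.inr ?_)
  exact (cqrScore_le_iff _ _ _ _ _).1
    (hω.trans (kthSmallest_map_univ_le_kthSmallest_ofFn_castSucc _ hk₀ hkn))

/-- **Theorem 4, CES for quantile regression.**  For each placeholder
value `y`, the low and high quantile models minimizing the augmented pinball losses
are selected; the prediction interval is the convex hull of all `y` covered by the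
CQR interval built from the selected models.  The case `Q = +∞` for
`⌈(1-α)(n+1)⌉ > n` is encoded by the disjunct `n < k`.  It has marginal
coverage `1 - α`. -/
theorem ces_quantile_regression_coverage
    {Ω 𝒳 : Type*} [MeasurableSpace Ω] [MeasurableSpace 𝒳]
    (P : Measure Ω) [IsProbabilityMeasure P]
    (n T : ℕ) (hn : 1 ≤ n) (hT : 0 < T)
    (X : Fin (n + 1) → Ω → 𝒳) (Y : Fin (n + 1) → Ω → ℝ)
    (hXY : ∀ i, Measurable (fun ω => (X i ω, Y i ω)))
    (hexch : ∀ σ : Equiv.Perm (Fin (n + 1)),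
      P.map (fun ω => fun i => (X (σ i) ω, Y (σ i) ω)) =
        P.map (fun ω => fun i => (X i ω, Y i ω)))
    (βlo βhi : ℝ) (hβlo : βlo ∈ Set.Ioo (0 : ℝ) 1) (hβhi : βhi ∈ Set.Ioo (0 : ℝ) 1)
    (qlo qhi : Fin T → 𝒳 → ℝ)
    (hqlo : ∀ t, Measurable (qlo t)) (hqhi : ∀ t, Measurable (qhi t))
    (α : ℝ) (hα : α ∈ Set.Ioo (0 : ℝ) 1) :
    ENNReal.ofReal (1 - α) ≤
      P {ω |
        Y (Fin.last n) ω ∈ convexHull ℝ {y : ℝ |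
          let mlo : Fin T := argminFin hT (fun t =>
            (∑ i : Fin n, pinball βlo (Y i.castSucc ω) (qlo t (X i.castSucc ω))) +
              pinball βlo y (qlo t (X (Fin.last n) ω)))
          let mhi : Fin T := argminFin hT (fun t =>
            (∑ i : Fin n, pinball βhi (Y i.castSucc ω) (qhi t (X i.castSucc ω))) +
              pinball βhi y (qhi t (X (Fin.last n) ω)))
          let k : ℕ := ⌈(1 - α) * ((n : ℝ) + 1)⌉₊
          let Q : ℝ := kthSmallest
            (↑(List.ofFn fun i : Fin n =>
              max (qlo mlo (X i.castSucc ω) - Y i.castSucc ω)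
                (Y i.castSucc ω - qhi mhi (X i.castSucc ω)))) k
          n < k ∨
            (qlo mlo (X (Fin.last n) ω) - Q ≤ y ∧
              y ≤ qhi mhi (X (Fin.last n) ω) + Q)}} :=
  ces_quantile_regression_coverage_general P n T hT X Y hXY hexch βlo βhi qlo qhi hqlo hqhi α hα

end
end
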